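/- arXiv:2006.12546 — 4 statements merged into one kernel-verified Lean document; each statement's English description precedes it below -/
import Mathlib

section
/- Let v > 36 be a superabundant number. Then v has a prime factorization of the form v = ∏_{j=1}^{k} p_j^{a_j} (a product over consecutive primes starting at 2) in which a_k = 1 and a_j ≥ a_{j+1} ≥ 1 for every positive integer j ≤ k−1. -/
/-!
Superabundance rules out replacing a part `x` of `v` (coprime to the cofactor) by a smaller `y`
with `σ(y)/y ≥ σ(x)/x`. Moving one factor `q` to a smaller prime `p` is such a replacement as soon
as `v_q(v) > v_p(v)`, so the exponents are non-increasing along the primes and the primes dividing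
`v` are the first `k` primes. If the exponent of `p_k` were at least `2`, replacing `p_{k-1} p_k`
by `p_{k+1} < 2 p_k` (Bertrand) would be such a replacement unless `v = 36`; for `k = 1`, replacing
`4` by `3` works unless `v = 4`.
-/

/-- Sum of the positive divisors of `n`. -/
def sigma1 (n : ℕ) : ℕ := ∑ d ∈ n.divisors, d

/-- `G n = σ(n) / (n · log log n)`. -/
noncomputable def G (n : ℕ) : ℝ := (sigma1 n : ℝ) / ((n : ℝ) * Real.log (Real.log n))

/-- `s` is superabundant: `σ(s)/s > σ(t)/t` for every positive integer `t < s`. -/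
def Superabundant (s : ℕ) : Prop :=
  0 < s ∧ ∀ t : ℕ, 0 < t → t < s → (sigma1 t : ℝ) / (t : ℝ) < (sigma1 s : ℝ) / (s : ℝ)

/-- The `j`-th prime (`1`-indexed): `nthPrime 1 = 2`, `nthPrime 2 = 3`, ... -/
noncomputable def nthPrime (j : ℕ) : ℕ := Nat.nth Nat.Prime (j - 1)

/-- The `j`-th primorialUpTo `N_j = p₁ ⋯ p_j`. -/
noncomputable def primorialUpTo (j : ℕ) : ℕ := ∏ i ∈ Finset.Icc 1 j, nthPrime i

open ArithmeticFunction
open scoped ArithmeticFunction.sigma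

theorem sigma1_eq_sigma_one (n : ℕ) : sigma1 n = σ 1 n := (sigma_one_apply n).symm

namespace ArithmeticFunction

theorem sigma_le_sigma_of_dvd (k : ℕ) {m n : ℕ} (h : m ∣ n) (hn : n ≠ 0) : σ k m ≤ σ k n := by
  simp only [sigma_apply]
  exact Finset.sum_le_sum_of_subset (Nat.divisors_subset_of_dvd hn h)

theorem sigma_one_prime_pow_succ {p : ℕ} (hp : p.Prime) (e : ℕ) :
    σ 1 (p ^ (e + 1)) = p * σ 1 (p ^ e) + 1 := by
  rw [sigma_one_apply_prime_pow hp, sigma_one_apply_prime_pow hp, geom_sum_succ]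

theorem sigma_one_prime_pow_le {p q : ℕ} (hp : p.Prime) (hq : q.Prime) (hpq : p ≤ q) (e : ℕ) :
    σ 1 (p ^ e) ≤ σ 1 (q ^ e) := by
  rw [sigma_one_apply_prime_pow hp, sigma_one_apply_prime_pow hq]
  gcongr

theorem sigma_one_apply_prime {p : ℕ} (hp : p.Prime) : σ 1 p = p + 1 := by
  simpa using sigma_one_prime_pow_succ hp 0

theorem prime_add_one_le_sigma_one_prime_pow {p e : ℕ} (hp : p.Prime) (he : 0 < e) :
    p + 1 ≤ σ 1 (p ^ e) := by
  simpa [sigma_one_apply_prime hp] using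
    sigma_le_sigma_of_dvd 1 (pow_dvd_pow p he) (pow_ne_zero e hp.ne_zero)

theorem sigma_one_prime_pow_mul_prime_pow {p q : ℕ} (hp : p.Prime) (hq : q.Prime) (hpq : p ≠ q)
    (a b : ℕ) : σ 1 (p ^ a * q ^ b) = σ 1 (p ^ a) * σ 1 (q ^ b) :=
  isMultiplicative_sigma.map_mul_of_coprime (((Nat.coprime_primes hp hq).2 hpq).pow a b)

end ArithmeticFunction

theorem Nat.exists_eq_prime_pow_mul_prime_pow_mul {n p q : ℕ} (hn : n ≠ 0) (hp : p.Prime)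
    (hq : q.Prime) (hpq : p ≠ q) :
    ∃ m, n = p ^ n.factorization p * q ^ n.factorization q * m ∧ p.Coprime m ∧ q.Coprime m := by
  set n' := ordCompl[p] n
  have hn' : n' ≠ 0 := (Nat.ordCompl_pos p hn).ne'
  have hfac : n'.factorization q = n.factorization q := by
    rw [Nat.factorization_ordCompl, Finsupp.erase_ne hpq.symm]
  refine ⟨ordCompl[q] n', ?_, ?_, Nat.coprime_ordCompl hq hn'⟩
  · rw [mul_assoc, ← hfac, Nat.ordProj_mul_ordCompl_eq_self, Nat.ordProj_mul_ordCompl_eq_self]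
  · exact (Nat.coprime_ordCompl hp hn).coprime_dvd_right (Nat.ordCompl_dvd n' q)

theorem Nat.nth_prime_succ_lt_two_mul (n : ℕ) :
    Nat.nth Nat.Prime (n + 1) < 2 * Nat.nth Nat.Prime n := by
  have hp := Nat.prime_nth_prime n
  obtain ⟨r, hr, hpr, hr2⟩ := Nat.exists_prime_lt_and_le_two_mul _ hp.ne_zero
  have hr2' : r ≠ 2 * Nat.nth Nat.Prime n := fun h =>
    Nat.not_prime_mul (by norm_num) hp.one_lt.ne' (h ▸ hr)
  have : Nat.nth Nat.Prime (n + 1) ≤ r := by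
    by_contra! h
    exact (Nat.le_nth_of_lt_nth_succ h hr).not_gt hpr
  omega

theorem Nat.prod_range_nth_prime_pow_factorization {n k : ℕ} (hn : n ≠ 0)
    (hk : ∀ i, k ≤ i → n.factorization (Nat.nth Nat.Prime i) = 0) :
    ∏ i ∈ Finset.range k, Nat.nth Nat.Prime i ^ n.factorization (Nat.nth Nat.Prime i) = n := by
  have hsupp : n.factorization.support ⊆ (Finset.range k).image (Nat.nth Nat.Prime) := by
    intro p hp
    have hpp : p.Prime := Nat.prime_of_mem_primeFactors (Nat.support_factorization n ▸ hp)
    refine Finset.mem_image.2 ⟨Nat.count Nat.Prime p, Finset.mem_range.2 ?_, Nat.nth_count hpp⟩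
    by_contra! h
    exact Finsupp.mem_support_iff.1 hp (Nat.nth_count hpp ▸ hk _ h)
  conv_rhs => rw [← Nat.prod_factorization_pow_eq_self hn]
  rw [Finsupp.prod_of_support_subset _ hsupp _ (fun _ _ => pow_zero _),
    Finset.prod_image fun i _ j _ h => Nat.nth_injective Nat.infinite_setOfPred_prime h]

theorem mul_add_add_one_le_mul_of_lt_two_mul {q' q r A B : ℕ} (hq' : 5 ≤ q') (hq : q < 2 * q')
    (hr : r < 2 * q) (hA : q' * (q' + 1) ≤ A) (hB : q * (q + 1) ≤ B) :
    r * (A + B + 1) ≤ A * B := by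
  zify at *
  have hAr : 13 ≤ (A : ℤ) - r := by nlinarith
  have hBr : (q : ℤ) * q - q + 1 ≤ B - r := by nlinarith
  have hprod := mul_le_mul hAr hBr (by nlinarith) (by linarith)
  have hr2 : (r : ℤ) * (r + 1) ≤ (2 * q - 1) * (2 * q) :=
    mul_le_mul (by linarith) (by linarith) (by linarith) (by linarith)
  nlinarith

namespace Superabundant

variable {v : ℕ}

theorem sigma_one_mul_lt {x y m : ℕ} (hv : Superabundant (x * m)) (hxm : x.Coprime m)
    (hym : y.Coprime m) (hy : 0 < y) (hyx : y < x) : σ 1 y * x < σ 1 x * y := by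
  have hm : 0 < m := Nat.pos_of_mul_pos_left hv.1
  have h := hv.2 (y * m) (Nat.mul_pos hy hm) (Nat.mul_lt_mul_of_pos_right hyx hm)
  rw [div_lt_div_iff₀ (Nat.cast_pos.2 (Nat.mul_pos hy hm)) (Nat.cast_pos.2 hv.1)] at h
  simp only [sigma1_eq_sigma_one, isMultiplicative_sigma.map_mul_of_coprime hxm,
    isMultiplicative_sigma.map_mul_of_coprime hym] at h
  have h' : σ 1 y * x * (σ 1 m * m) < σ 1 x * y * (σ 1 m * m) := by
    have h'' : σ 1 y * σ 1 m * (x * m) < σ 1 x * σ 1 m * (y * m) := by exact_mod_cast h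
    convert h'' using 1 <;> ring
  exact lt_of_mul_lt_mul_right h' (Nat.zero_le _)

theorem factorization_le_of_lt (hv : Superabundant v) {p q : ℕ} (hp : p.Prime) (hq : q.Prime)
    (hpq : p < q) : v.factorization q ≤ v.factorization p := by
  by_contra! hlt
  obtain ⟨m, hvm, hpm, hqm⟩ :=
    Nat.exists_eq_prime_pow_mul_prime_pow_mul hv.1.ne' hp hq hpq.ne
  set a := v.factorization p
  obtain ⟨c, hc⟩ : ∃ c, v.factorization q = c + 1 := ⟨_, (Nat.sub_add_cancel (by omega)).symm⟩
  rw [hc] at hvm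
  rw [hvm] at hv
  have hpos := Nat.mul_pos (pow_pos hp.pos a) (pow_pos hq.pos c)
  refine (hv.sigma_one_mul_lt (y := p ^ (a + 1) * q ^ c)
    ((hpm.pow_left _).mul_left (hqm.pow_left _)) ((hpm.pow_left _).mul_left (hqm.pow_left _))
    (Nat.mul_pos (pow_pos hp.pos _) (pow_pos hq.pos _)) ?_).not_ge ?_
  · calc p ^ (a + 1) * q ^ c = p ^ a * q ^ c * p := by ring
      _ < p ^ a * q ^ c * q := by gcongr
      _ = p ^ a * q ^ (c + 1) := by ring
  · rw [sigma_one_prime_pow_mul_prime_pow hp hq hpq.ne,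
      sigma_one_prime_pow_mul_prime_pow hp hq hpq.ne, sigma_one_prime_pow_succ hp,
      sigma_one_prime_pow_succ hq]
    have key : p * σ 1 (p ^ a) ≤ q * σ 1 (q ^ c) :=
      Nat.mul_le_mul hpq.le ((sigma_one_prime_pow_le hp hq hpq.le a).trans
        (sigma_le_sigma_of_dvd 1 (pow_dvd_pow q (by omega)) (pow_ne_zero c hq.ne_zero)))
    calc σ 1 (p ^ a) * (q * σ 1 (q ^ c) + 1) * (p ^ (a + 1) * q ^ c)
        = (p * q * σ 1 (p ^ a) * σ 1 (q ^ c) + p * σ 1 (p ^ a)) * (p ^ a * q ^ c) := by ring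
      _ ≤ (p * q * σ 1 (p ^ a) * σ 1 (q ^ c) + q * σ 1 (q ^ c)) * (p ^ a * q ^ c) := by gcongr
      _ = (p * σ 1 (p ^ a) + 1) * σ 1 (q ^ c) * (p ^ a * q ^ (c + 1)) := by ring

theorem antitone_factorization_nth_prime (hv : Superabundant v) :
    Antitone fun i => v.factorization (Nat.nth Nat.Prime i) :=
  antitone_nat_of_succ_le fun i => hv.factorization_le_of_lt (Nat.prime_nth_prime i)
    (Nat.prime_nth_prime _) (Nat.nth_strictMono Nat.infinite_setOfPred_prime i.lt_succ_self)

theorem ne_two_pow (hv : Superabundant v) {e : ℕ} (he : 3 ≤ e) : v ≠ 2 ^ e := by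
  rintro rfl
  obtain ⟨f, rfl⟩ : ∃ f, e = f + 3 := ⟨e - 3, by omega⟩
  rw [← mul_one (2 ^ (f + 3))] at hv
  refine (hv.sigma_one_mul_lt (y := 3 ^ 1 * 2 ^ (f + 1)) (Nat.coprime_one_right _)
    (Nat.coprime_one_right _) (by positivity) ?_).not_ge ?_
  · calc 3 ^ 1 * 2 ^ (f + 1) < 4 * 2 ^ (f + 1) := by gcongr; norm_num
      _ = 2 ^ (f + 3) := by ring
  · rw [sigma_one_prime_pow_mul_prime_pow Nat.prime_three Nat.prime_two (by norm_num),
      sigma_one_prime_pow_succ Nat.prime_two (f + 2),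
      sigma_one_prime_pow_succ Nat.prime_two (f + 1),
      pow_one, sigma_one_apply_prime Nat.prime_three]
    have hS : 3 ≤ σ 1 (2 ^ (f + 1)) := prime_add_one_le_sigma_one_prime_pow Nat.prime_two (by omega)
    calc (2 * (2 * σ 1 (2 ^ (f + 1)) + 1) + 1) * (3 * 2 ^ (f + 1))
        = (12 * σ 1 (2 ^ (f + 1)) + 9) * 2 ^ (f + 1) := by ring
      _ ≤ 16 * σ 1 (2 ^ (f + 1)) * 2 ^ (f + 1) := by gcongr; omega
      _ = (3 + 1) * σ 1 (2 ^ (f + 1)) * 2 ^ (f + 3) := by ring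

-- Superabundance forbids replacing `q' q` by `r`; with `A = q' σ(q'^a)` and `B = q σ(q^c)`
-- this reads `A B < r (A + B + 1)`.
theorem mul_lt_mul_add_add_one (hv : Superabundant v) {q' q r : ℕ} (hq' : q'.Prime)
    (hq : q.Prime) (hr : r.Prime) (hq'q : q' < q) (hqr : q < r) (hrq'q : r < q' * q)
    (hrv : ¬ r ∣ v) {a c : ℕ} (ha : v.factorization q' = a + 1) (hc : v.factorization q = c + 1) :
    q' * σ 1 (q' ^ a) * (q * σ 1 (q ^ c)) < r * (q' * σ 1 (q' ^ a) + q * σ 1 (q ^ c) + 1) := by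
  obtain ⟨m, hvm, hq'm, hqm⟩ :=
    Nat.exists_eq_prime_pow_mul_prime_pow_mul hv.1.ne' hq' hq hq'q.ne
  rw [ha, hc] at hvm
  have hrm : r.Coprime m :=
    (Nat.Prime.coprime_iff_not_dvd hr).2 fun h => hrv (hvm ▸ h.mul_left _)
  have hr' : (q' ^ a * q ^ c).Coprime r :=
    (((Nat.coprime_primes hq' hr).2 (by omega)).pow_left a).mul_left
      (((Nat.coprime_primes hq hr).2 hqr.ne).pow_left c)
  rw [hvm] at hv
  by_contra! hle
  have hpos := Nat.mul_pos (pow_pos hq'.pos a) (pow_pos hq.pos c)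
  refine (hv.sigma_one_mul_lt (y := q' ^ a * q ^ c * r)
    ((hq'm.pow_left _).mul_left (hqm.pow_left _))
    (((hq'm.pow_left _).mul_left (hqm.pow_left _)).mul_left hrm)
    (Nat.mul_pos hpos hr.pos) ?_).not_ge ?_
  · calc q' ^ a * q ^ c * r < q' ^ a * q ^ c * (q' * q) := by gcongr
      _ = q' ^ (a + 1) * q ^ (c + 1) := by ring
  · rw [isMultiplicative_sigma.map_mul_of_coprime hr',
      sigma_one_prime_pow_mul_prime_pow hq' hq hq'q.ne,
      sigma_one_prime_pow_mul_prime_pow hq' hq hq'q.ne, sigma_one_prime_pow_succ hq',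
      sigma_one_prime_pow_succ hq, sigma_one_apply_prime hr]
    calc (q' * σ 1 (q' ^ a) + 1) * (q * σ 1 (q ^ c) + 1) * (q' ^ a * q ^ c * r)
        = (q' * σ 1 (q' ^ a) + 1) * (q * σ 1 (q ^ c) + 1) * r * (q' ^ a * q ^ c) := by ring
      _ ≤ q' * σ 1 (q' ^ a) * (q * σ 1 (q ^ c)) * (r + 1) * (q' ^ a * q ^ c) := by
          exact Nat.mul_le_mul_right _ (by nlinarith)
      _ = σ 1 (q' ^ a) * σ 1 (q ^ c) * (r + 1) * (q' ^ (a + 1) * q ^ (c + 1)) := by ring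

theorem three_le_factorization_two (hv : Superabundant v) (h36 : v ≠ 36)
    (h5 : v.factorization 5 = 0) (h3 : 2 ≤ v.factorization 3) : 3 ≤ v.factorization 2 := by
  have h32 := hv.factorization_le_of_lt Nat.prime_two Nat.prime_three (by norm_num)
  by_contra! h2
  have hzero : ∀ j, 2 ≤ j → v.factorization (Nat.nth Nat.Prime j) = 0 := fun j hj =>
    Nat.le_zero.1 ((hv.antitone_factorization_nth_prime hj).trans_eq
      (show v.factorization (Nat.nth Nat.Prime 2) = 0 by rwa [Nat.nth_prime_two_eq_five]))
  have hprod := Nat.prod_range_nth_prime_pow_factorization hv.1.ne' hzero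
  simp only [Finset.prod_range_succ, Finset.prod_range_zero, Nat.nth_prime_zero_eq_two,
    Nat.nth_prime_one_eq_three, show v.factorization 2 = 2 by omega,
    show v.factorization 3 = 2 by omega] at hprod
  exact h36 hprod.symm

theorem factorization_nth_prime_succ_le_one (hv : Superabundant v) (h36 : v ≠ 36) {i : ℕ}
    (hi : v.factorization (Nat.nth Nat.Prime (i + 2)) = 0) :
    v.factorization (Nat.nth Nat.Prime (i + 1)) ≤ 1 := by
  by_contra! h2
  have hprime := Nat.prime_nth_prime
  have hmono := Nat.nth_strictMono Nat.infinite_setOfPred_prime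
  have hle : v.factorization (Nat.nth Nat.Prime (i + 1)) ≤ v.factorization (Nat.nth Nat.Prime i) :=
    hv.antitone_factorization_nth_prime i.le_succ
  obtain ⟨c, hc⟩ : ∃ c, v.factorization (Nat.nth Nat.Prime (i + 1)) = c + 1 :=
    ⟨_, (Nat.sub_add_cancel (by omega)).symm⟩
  obtain ⟨a, ha⟩ : ∃ a, v.factorization (Nat.nth Nat.Prime i) = a + 1 :=
    ⟨_, (Nat.sub_add_cancel (by omega)).symm⟩
  have hca : c ≤ a := by omega
  have hc0 : 0 < c := by omega
  have hq := Nat.nth_prime_succ_lt_two_mul i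
  have hr := Nat.nth_prime_succ_lt_two_mul (i + 1)
  have hrq'q : Nat.nth Nat.Prime (i + 2) < Nat.nth Nat.Prime i * Nat.nth Nat.Prime (i + 1) :=
    hr.trans_le (Nat.mul_le_mul_right _ (hprime i).two_le)
  have key := hv.mul_lt_mul_add_add_one (hprime i) (hprime (i + 1)) (hprime (i + 2))
    (hmono i.lt_succ_self) (hmono (i + 1).lt_succ_self) hrq'q
    (fun h => ((hprime _).factorization_pos_of_dvd hv.1.ne' h).ne' hi) ha hc
  have hA := Nat.mul_le_mul_left (Nat.nth Nat.Prime i)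
    (prime_add_one_le_sigma_one_prime_pow (hprime i) (hc0.trans_le hca))
  have hB := Nat.mul_le_mul_left (Nat.nth Nat.Prime (i + 1))
    (prime_add_one_le_sigma_one_prime_pow (hprime (i + 1)) hc0)
  obtain hi2 | hi2 := Nat.lt_or_ge i 2
  interval_cases i
  · simp only [Nat.reduceAdd, Nat.nth_prime_zero_eq_two, Nat.nth_prime_one_eq_three,
      Nat.nth_prime_two_eq_five] at key hB ha hc hi
    have ha2 : 2 ≤ a := by have := hv.three_le_factorization_two h36 hi (by omega); omega
    have h7 : 7 ≤ σ 1 (2 ^ a) :=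
      calc 7 = σ 1 (2 ^ 2) := by rw [sigma_one_apply_prime_pow Nat.prime_two]; rfl
        _ ≤ σ 1 (2 ^ a) := sigma_le_sigma_of_dvd 1 (pow_dvd_pow 2 ha2) (by positivity)
    nlinarith
  · simp only [Nat.reduceAdd, Nat.nth_prime_one_eq_three, Nat.nth_prime_two_eq_five,
      Nat.nth_prime_three_eq_seven] at key hA hB
    nlinarith
  · exact key.not_ge (mul_add_add_one_le_mul_of_lt_two_mul
      (Nat.nth_prime_two_eq_five ▸ hmono.monotone hi2) hq hr hA hB)

theorem factorization_nth_prime_le_one (hv : Superabundant v) (h4 : v ≠ 4) (h36 : v ≠ 36)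
    {j : ℕ} (hj : v.factorization (Nat.nth Nat.Prime (j + 1)) = 0) :
    v.factorization (Nat.nth Nat.Prime j) ≤ 1 := by
  rcases j with _ | i
  · have hzero : ∀ i, 1 ≤ i → v.factorization (Nat.nth Nat.Prime i) = 0 := fun i hi =>
      Nat.le_zero.1 ((hv.antitone_factorization_nth_prime hi).trans_eq hj)
    have hprod := Nat.prod_range_nth_prime_pow_factorization hv.1.ne' hzero
    rw [Finset.prod_range_one] at hprod
    rw [Nat.nth_prime_zero_eq_two] at hprod ⊢
    by_contra! h2
    refine hv.ne_two_pow (e := v.factorization 2) ?_ hprod.symm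
    by_contra! h3
    rw [show v.factorization 2 = 2 by omega] at hprod
    exact h4 hprod.symm
  · exact hv.factorization_nth_prime_succ_le_one h36 hj

end Superabundant

/-- Every superabundant number `v > 36` has a prime factorization
`v = ∏_{j=1}^{k} p_j ^ (a j)` over consecutive primes starting at `2`,
with `a k = 1` and `a j ≥ a (j+1) ≥ 1` for every positive integer `j ≤ k - 1`. -/
theorem superabundant_factorization (v : ℕ) (hv : Superabundant v) (hv36 : 36 < v) :
    ∃ k : ℕ, 1 ≤ k ∧ ∃ a : ℕ → ℕ,
      v = ∏ j ∈ Finset.Icc 1 k, nthPrime j ^ a j ∧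
      a k = 1 ∧
      ∀ j : ℕ, 1 ≤ j → j ≤ k - 1 → a (j + 1) ≤ a j ∧ 1 ≤ a (j + 1) := by
  set f : ℕ → ℕ := fun i => v.factorization (Nat.nth Nat.Prime i)
  have hanti : Antitone f := hv.antitone_factorization_nth_prime
  have hex : ∃ k, f k = 0 := ⟨v, Nat.factorization_eq_zero_of_lt
    ((Nat.lt_add_of_pos_right two_pos).trans_le (Nat.add_two_le_nth_prime v))⟩
  set k := Nat.find hex
  have hzero : ∀ i, k ≤ i → f i = 0 := fun i hi =>
    Nat.le_zero.1 ((hanti hi).trans_eq (Nat.find_spec hex))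
  have hpos : ∀ i < k, 1 ≤ f i := fun i hi => Nat.one_le_iff_ne_zero.2 (Nat.find_min hex hi)
  have hprod := Nat.prod_range_nth_prime_pow_factorization hv.1.ne' hzero
  have hk : 1 ≤ k := by
    by_contra! h
    rw [Nat.lt_one_iff.1 h, Finset.prod_range_zero] at hprod
    omega
  refine ⟨k, hk, fun j => f (j - 1), ?_, ?_, fun j hj hjk => ⟨hanti (by omega), hpos j (by omega)⟩⟩
  · rw [← Finset.Ico_add_one_right_eq_Icc, Finset.prod_Ico_eq_prod_range]
    simpa [nthPrime] using hprod.symm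
  · have hle := hv.factorization_nth_prime_le_one (by omega) (by omega) (j := k - 1)
      (by rw [Nat.sub_add_cancel hk]; exact Nat.find_spec hex)
    exact le_antisymm hle (hpos (k - 1) (by omega))
end

section
/- Every extraordinary number n > 500 has at least three prime factors counted with multiplicity, i.e. Ω(n) ≥ 3. -/
/-- `n` is a GA1 number: composite and `G n ≥ G (n/p)` for every prime `p ∣ n`. -/
def GA1 (n : ℕ) : Prop :=
  1 < n ∧ ¬ n.Prime ∧ ∀ p : ℕ, p.Prime → p ∣ n → G (n / p) ≤ G n

/-- `n` is a GA2 number: `n > 1` and `G n ≥ G (c·n)` for all positive integers `c`. -/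
def GA2 (n : ℕ) : Prop :=
  1 < n ∧ ∀ c : ℕ, 0 < c → G (c * n) ≤ G n

/-- `n` is extraordinary: both GA1 and GA2. -/
def Extraordinary (n : ℕ) : Prop := GA1 n ∧ GA2 n

/- ### Auxiliary lemmas -/

lemma sigma1_prime {p : ℕ} (hp : p.Prime) : sigma1 p = p + 1 := by
  rw [sigma1, hp.divisors, Finset.sum_insert (by simp [hp.one_lt.ne]), Finset.sum_singleton,
    add_comm]

lemma sigma1_cop (a b : ℕ) (h : Nat.Coprime a b) : sigma1 (a * b) = sigma1 a * sigma1 b :=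
  Nat.Coprime.sum_divisors_mul h

lemma sigma1_30030 : sigma1 30030 = 96768 := by
  have p2 := sigma1_prime (p := 2) (by norm_num)
  have p3 := sigma1_prime (p := 3) (by norm_num)
  have p5 := sigma1_prime (p := 5) (by norm_num)
  have p7 := sigma1_prime (p := 7) (by norm_num)
  have p11 := sigma1_prime (p := 11) (by norm_num)
  have p13 := sigma1_prime (p := 13) (by norm_num)
  rw [show (30030:ℕ) = 2*15015 by norm_num, sigma1_cop _ _ (by norm_num),
    show (15015:ℕ) = 3*5005 by norm_num, sigma1_cop _ _ (by norm_num),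
    show (5005:ℕ) = 5*1001 by norm_num, sigma1_cop _ _ (by norm_num),
    show (1001:ℕ) = 7*143 by norm_num, sigma1_cop _ _ (by norm_num),
    show (143:ℕ) = 11*13 by norm_num, sigma1_cop _ _ (by norm_num),
    p2, p3, p5, p7, p11, p13]

lemma sigma1_mul_ge (m n : ℕ) (hn : 0 < n) : sigma1 m * n ≤ sigma1 (m * n) := by
  classical
  have himg : (m.divisors).image (· * n) ⊆ (m * n).divisors := by
    intro d hd
    simp only [Finset.mem_image, Nat.mem_divisors] at *
    obtain ⟨e, ⟨he, hm0⟩, rfl⟩ := hd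
    exact ⟨mul_dvd_mul he dvd_rfl, by positivity⟩
  calc sigma1 m * n = ∑ d ∈ m.divisors, d * n := by rw [sigma1, Finset.sum_mul]
    _ = ∑ d ∈ (m.divisors).image (· * n), d := by
        rw [Finset.sum_image]
        intro a _ b _ hab
        exact Nat.eq_of_mul_eq_mul_right hn hab
    _ ≤ sigma1 (m * n) := Finset.sum_le_sum_of_subset himg

lemma sigma1_pq {p q : ℕ} (hp : p.Prime) (hq : q.Prime) (hbig : 500 < p * q) :
    23 * sigma1 (p * q) ≤ 36 * (p * q) := by
  by_cases hpq : p = q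
  · subst hpq
    have hs : sigma1 (p * p) = p * p + p + 1 := by
      rw [show p * p = p ^ 2 by ring, sigma1, Nat.sum_divisors_prime_pow hp]
      simp [Finset.sum_range_succ]; ring
    rw [hs]
    have hp23 : 23 ≤ p := by nlinarith [hp.two_le]
    nlinarith
  · have hco : Nat.Coprime p q := (Nat.coprime_primes hp hq).mpr hpq
    rw [sigma1_cop _ _ hco, sigma1_prime hp, sigma1_prime hq]
    rcases le_total p q with h | h
    · have hq23 : 23 ≤ q := by nlinarith [hp.two_le, hq.two_le]
      nlinarith [hp.two_le]
    · have hp23 : 23 ≤ p := by nlinarith [hp.two_le, hq.two_le]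
      nlinarith [hq.two_le]

lemma exp6lt : Real.exp 6 < 501 := by
  calc Real.exp 6 = Real.exp 1 ^ (6:ℕ) := by rw [← Real.exp_nat_mul]; norm_num
    _ < 2.7182818286 ^ (6:ℕ) :=
        pow_lt_pow_left₀ Real.exp_one_lt_d9 (le_of_lt (Real.exp_pos 1)) (by norm_num)
    _ < 501 := by norm_num

lemma exp7le : Real.exp 7 ≤ 1296 := by
  calc Real.exp 7 = Real.exp 1 ^ (7:ℕ) := by rw [← Real.exp_nat_mul]; norm_num
    _ ≤ 2.7182818286 ^ (7:ℕ) :=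
        le_of_lt (pow_lt_pow_left₀ Real.exp_one_lt_d9 (le_of_lt (Real.exp_pos 1)) (by norm_num))
    _ ≤ 1296 := by norm_num

lemma exp11gt : (30030:ℝ) < Real.exp 11 := by
  have h : (2.7182818283:ℝ) ^ (11:ℕ) < Real.exp 1 ^ (11:ℕ) :=
    pow_lt_pow_left₀ Real.exp_one_gt_d9 (by norm_num) (by norm_num)
  calc (30030:ℝ) < 2.7182818283 ^ (11:ℕ) := by norm_num
    _ < Real.exp 1 ^ (11:ℕ) := h
    _ = Real.exp 11 := by rw [← Real.exp_nat_mul]; norm_num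

lemma exp21gt : ((17:ℝ)/6) ^ (20:ℕ) < Real.exp 21 := by
  have h : (2.7182818283:ℝ) ^ (21:ℕ) < Real.exp 1 ^ (21:ℕ) :=
    pow_lt_pow_left₀ Real.exp_one_gt_d9 (by norm_num) (by norm_num)
  calc ((17:ℝ)/6) ^ (20:ℕ) < 2.7182818283 ^ (21:ℕ) := by norm_num
    _ < Real.exp 1 ^ (21:ℕ) := h
    _ = Real.exp 21 := by rw [← Real.exp_nat_mul]; norm_num

lemma log6ge : (7:ℝ)/4 ≤ Real.log 6 := by
  have h4 : Real.exp (7/4) ^ (4:ℕ) = Real.exp 7 := by rw [← Real.exp_nat_mul]; norm_num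
  have h : Real.exp (7/4) ≤ 6 := by
    apply le_of_pow_le_pow_left₀ (n := 4) (by norm_num) (by norm_num)
    rw [h4]
    calc Real.exp 7 ≤ 1296 := exp7le
      _ = 6 ^ (4:ℕ) := by norm_num
  have := Real.log_le_log (Real.exp_pos _) h
  rwa [Real.log_exp] at this

lemma log176le : Real.log (17/6) ≤ 21/20 := by
  have h4 : Real.exp (21/20) ^ (20:ℕ) = Real.exp 21 := by rw [← Real.exp_nat_mul]; norm_num
  have h : (17:ℝ)/6 ≤ Real.exp (21/20) := by
    apply le_of_pow_le_pow_left₀ (n := 20) (by norm_num) (le_of_lt (Real.exp_pos _))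
    rw [h4]; exact le_of_lt exp21gt
  have := Real.log_le_log (by norm_num) h
  rwa [Real.log_exp] at this

lemma log30030lt : Real.log 30030 < 11 := by
  rw [Real.log_lt_iff_lt_exp (by norm_num)]; exact exp11gt

/-- Every extraordinary number `n > 500` has at least three prime factors
counted with multiplicity, i.e. `Ω(n) ≥ 3`. -/
theorem extraordinary_omega_ge_three (n : ℕ) (hn : 500 < n) (hext : Extraordinary n) :
    3 ≤ (Nat.primeFactorsList n).length := by
  obtain ⟨⟨hn1, hnprime, _⟩, ⟨_, hGA2⟩⟩ := hext
  by_contra hlen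
  push_neg at hlen
  have hn0 : n ≠ 0 := by omega
  -- n is a product of at most two primes; composite excludes 0 and 1 factors
  have hprod := Nat.prod_primeFactorsList hn0
  obtain ⟨p, q, hp, hq, hnpq⟩ : ∃ p q : ℕ, p.Prime ∧ q.Prime ∧ n = p * q := by
    rcases hl : Nat.primeFactorsList n with _ | ⟨p, _ | ⟨q, rest⟩⟩
    · rw [hl] at hprod; simp at hprod; omega
    · rw [hl] at hprod; simp at hprod
      exact absurd (hprod ▸ Nat.prime_of_mem_primeFactorsList (by rw [hl]; simp)) hnprime
    · have hrest : rest = [] := by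
        rw [hl] at hlen; simp at hlen; exact List.length_eq_zero_iff.mp (by omega)
      subst hrest
      rw [hl] at hprod; simp at hprod
      exact ⟨p, q, Nat.prime_of_mem_primeFactorsList (by rw [hl]; simp),
        Nat.prime_of_mem_primeFactorsList (by rw [hl]; simp), hprod.symm⟩
  -- σ(n) ≤ (36/23) n
  have hσn : 23 * sigma1 n ≤ 36 * n := by rw [hnpq]; exact sigma1_pq hp hq (hnpq ▸ hn)
  -- real-number setup
  set L := Real.log (n : ℝ) with hLdef
  have hnR : (1:ℝ) ≤ (n:ℝ) := by exact_mod_cast Nat.one_le_iff_ne_zero.mpr hn0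
  have hnRpos : (0:ℝ) < (n:ℝ) := by linarith
  have hL6 : 6 < L := by
    have h501 : Real.log 501 ≤ L :=
      Real.log_le_log (by norm_num) (by exact_mod_cast Nat.succ_le_of_lt hn)
    have h6 : (6:ℝ) < Real.log 501 := (Real.lt_log_iff_exp_lt (by norm_num)).mpr exp6lt
    linarith
  have hlogL : (7:ℝ)/4 ≤ Real.log L :=
    le_trans log6ge (Real.log_le_log (by norm_num) (by linarith))
  have hlogLpos : (0:ℝ) < Real.log L := by linarith
  -- upper bound on G n
  have hGn : G n ≤ (36/23) / Real.log L := by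
    rw [G, ← hLdef]
    have hσR : (sigma1 n : ℝ) ≤ 36/23 * n := by
      have : (23:ℝ) * (sigma1 n : ℝ) ≤ 36 * n := by exact_mod_cast hσn
      linarith
    calc (sigma1 n : ℝ) / ((n:ℝ) * Real.log L) ≤ (36/23 * n) / ((n:ℝ) * Real.log L) := by
          gcongr
      _ = (36/23) / Real.log L := by field_simp
  -- lower bound on G (30030 * n)
  have hcast : ((30030 * n : ℕ) : ℝ) = 30030 * (n:ℝ) := by push_cast; ring
  have hlogKn : Real.log (((30030 * n : ℕ)) : ℝ) = Real.log 30030 + L := by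
    rw [hcast, Real.log_mul (by norm_num) (by positivity)]
  have hlog30030 : (0:ℝ) ≤ Real.log 30030 := Real.log_nonneg (by norm_num)
  have hDpos : (0:ℝ) < Real.log (Real.log (((30030 * n : ℕ)) : ℝ)) := by
    apply Real.log_pos
    rw [hlogKn]; linarith
  have hD : Real.log (Real.log (((30030 * n : ℕ)) : ℝ)) ≤ Real.log (11 + L) := by
    apply Real.log_le_log (by rw [hlogKn]; linarith)
    rw [hlogKn]; linarith [log30030lt]
  have hlog11Lpos : (0:ℝ) < Real.log (11 + L) := Real.log_pos (by linarith)
  have hσKn : (96768:ℝ) * (n:ℝ) ≤ (sigma1 (30030 * n) : ℝ) := by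
    have := sigma1_mul_ge 30030 n (by omega)
    rw [sigma1_30030] at this
    exact_mod_cast this
  have hGKn : (96768/30030 : ℝ) / Real.log (11 + L) ≤ G (30030 * n) := by
    rw [G, hcast]
    rw [hcast] at hD hDpos
    calc (96768/30030 : ℝ) / Real.log (11 + L)
        = (96768 * (n:ℝ)) / ((30030 * (n:ℝ)) * Real.log (11 + L)) := by
          field_simp
      _ ≤ (96768 * (n:ℝ)) / ((30030 * (n:ℝ)) * Real.log (Real.log ((30030 * (n:ℝ))))) := by
          gcongr
      _ ≤ (sigma1 (30030 * n) : ℝ) / ((30030 * (n:ℝ)) * Real.log (Real.log ((30030 * (n:ℝ))))) := by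
          gcongr
  -- the key strict inequality
  have hmid : (36/23 : ℝ) / Real.log L < (96768/30030 : ℝ) / Real.log (11 + L) := by
    rw [div_lt_div_iff₀ hlogLpos hlog11Lpos]
    have h1 : Real.log (11 + L) ≤ 21/20 + Real.log L := by
      calc Real.log (11 + L) ≤ Real.log (17/6 * L) :=
            Real.log_le_log (by linarith) (by linarith)
        _ = Real.log (17/6) + Real.log L := Real.log_mul (by norm_num) (by linarith)
        _ ≤ 21/20 + Real.log L := by linarith [log176le]
    nlinarith
  have h2 := hGA2 30030 (by norm_num)
  linarith
end

section
/- Every extraordinary number n > 500 is even. -/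
/-!
For odd `n` the factor `2` is coprime to `n`, so `σ(2n) = 3σ(n)` and
`G(2n) / G(n) = (3/2) · log log n / log log (2n)`. Once `log n ≥ 2` this ratio exceeds `1`, because
`(log 2 + log n)² < (log n)³`; hence an odd `n` can never be GA2.
-/

open Real

lemma sigma1_pos {n : ℕ} (hn : 0 < n) : 0 < sigma1 n :=
  Finset.sum_pos (fun _ hd => Nat.pos_of_mem_divisors hd) (Nat.nonempty_divisors.mpr hn.ne')

lemma sigma1_two_mul_of_odd {n : ℕ} (hn : Odd n) : sigma1 (2 * n) = 3 * sigma1 n := by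
  simpa [sigma1, Nat.prime_two.sum_divisors] using hn.coprime_two_left.sum_divisors_mul

lemma two_le_log_of_eight_le {x : ℝ} (hx : 8 ≤ x) : 2 ≤ log x := by
  have hlog8 : log 8 = 3 * log 2 := by
    rw [show (8 : ℝ) = 2 ^ 3 by norm_num, log_pow]; norm_num
  have := log_two_gt_d9
  calc 2 ≤ log 8 := by linarith
    _ ≤ log x := log_le_log (by norm_num) hx

lemma sq_log_two_add_lt_pow_three {L : ℝ} (hL : 2 ≤ L) : (log 2 + L) ^ 2 < L ^ 3 := by
  have h2 := log_two_lt_d9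
  have h2' := log_pos one_lt_two
  nlinarith [mul_le_mul_of_nonneg_left hL (sq_nonneg L), sq_nonneg (L - log 2)]

lemma two_mul_log_log_two_mul_lt {x : ℝ} (hx : 2 ≤ log x) :
    2 * log (log (2 * x)) < 3 * log (log x) := by
  have hx0 : x ≠ 0 := by rintro rfl; norm_num at hx
  have hM : 0 < log 2 + log x := by linarith [log_pos one_lt_two]
  have hlog_sq : log ((log 2 + log x) ^ 2) = 2 * log (log 2 + log x) := by
    rw [log_pow]; norm_num
  have hlog_cube : log (log x ^ 3) = 3 * log (log x) := by
    rw [log_pow]; norm_num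
  rw [log_mul two_ne_zero hx0, ← hlog_sq, ← hlog_cube]
  exact log_lt_log (by positivity) (sq_log_two_add_lt_pow_three hx)

lemma G_lt_G_two_mul_of_odd {n : ℕ} (hn : 8 ≤ n) (hodd : Odd n) : G n < G (2 * n) := by
  have hn' : (8 : ℝ) ≤ n := by exact_mod_cast hn
  have hL := two_le_log_of_eight_le hn'
  have hL2 : 2 ≤ log (2 * n) := two_le_log_of_eight_le (by linarith)
  have hA : 0 < log (log n) := log_pos (by linarith)
  have hB : 0 < log (log (2 * n)) := log_pos (by linarith)
  have hσ : (0 : ℝ) < sigma1 n := by exact_mod_cast sigma1_pos (by omega)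
  have hlt := two_mul_log_log_two_mul_lt hL
  rw [G, G, sigma1_two_mul_of_odd hodd]
  push_cast
  rw [div_lt_div_iff₀ (by positivity) (by positivity)]
  nlinarith [mul_pos hσ (show (0 : ℝ) < n by linarith)]

/-- Every extraordinary number `n > 500` is even. -/
theorem extraordinary_even (n : ℕ) (hn : 500 < n) (hext : Extraordinary n) : Even n := by
  by_contra hodd
  have hlt := G_lt_G_two_mul_of_odd (by omega) (Nat.not_even_iff_odd.mp hodd)
  exact (hext.2.2 2 two_pos).not_gt hlt
end

section
/- If n = 2w where w > 250 is a prime, then G(n) < e^γ. -/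
/-- If `n = 2w` with `w > 250` prime, then `G(n) < e^γ`. -/
theorem G_two_mul_prime_lt (n w : ℕ) (hw : w.Prime) (hw250 : 250 < w) (hn : n = 2 * w) :
    G n < Real.exp Real.eulerMascheroniConstant := by
  have hγ : (1 : ℝ) < Real.exp Real.eulerMascheroniConstant := by
    have := Real.one_half_lt_eulerMascheroniConstant
    calc (1:ℝ) = Real.exp 0 := by simp
    _ < _ := Real.exp_lt_exp.mpr (by linarith)
  -- sigma computation
  have hw2 : w ≠ 2 := by omega
  have hcop : Nat.Coprime 2 w := (Nat.coprime_primes Nat.prime_two hw).mpr (by omega) |>.symm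
    |>.symm
  have hsig : sigma1 n = 3 * (w + 1) := by
    have h1 : sigma1 n = ArithmeticFunction.sigma 1 n := by
      rw [ArithmeticFunction.sigma_one_apply]; rfl
    rw [h1, hn, ArithmeticFunction.isMultiplicative_sigma.map_mul_of_coprime hcop,
      ArithmeticFunction.sigma_one_apply, ArithmeticFunction.sigma_one_apply,
      hw.divisors, Nat.prime_two.divisors]
    rw [Finset.sum_pair (by omega : 1 ≠ w), Finset.sum_pair (by omega : 1 ≠ 2)]; ring
  -- bounds
  have hwR : (251 : ℝ) ≤ (w : ℕ) := by exact_mod_cast Nat.succ_le_of_lt hw250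
  have hnR : (502 : ℝ) ≤ (n : ℝ) := by
    rw [hn]; push_cast; linarith
  have hexp6 : Real.exp 6 < 502 := by
    have h := Real.exp_one_lt_d9
    calc Real.exp 6 = Real.exp 1 ^ (6:ℕ) := by rw [← Real.exp_nat_mul]; norm_num
    _ < 2.7182818286 ^ (6:ℕ) := by
        exact pow_lt_pow_left₀ h (Real.exp_pos 1).le (by norm_num)
    _ < 502 := by norm_num
  have hlog6 : (6 : ℝ) < Real.log n := by
    rw [Real.lt_log_iff_exp_lt (by linarith)]
    linarith
  have hexp17 : Real.exp (17/10) < 6 := by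
    have h := Real.exp_one_lt_d9
    have h10 : Real.exp (17/10) ^ (10:ℕ) < 6 ^ (10:ℕ) := by
      calc Real.exp (17/10) ^ (10:ℕ) = Real.exp ((10:ℕ) * (17/10)) := by
            rw [Real.exp_nat_mul]
      _ = Real.exp 1 ^ (17:ℕ) := by rw [← Real.exp_nat_mul]; norm_num
      _ < 2.7182818286 ^ (17:ℕ) := pow_lt_pow_left₀ h (Real.exp_pos 1).le (by norm_num)
      _ < 6 ^ (10:ℕ) := by norm_num
    exact lt_of_pow_lt_pow_left₀ _ (by norm_num) h10
  have hloglog : (17/10 : ℝ) < Real.log (Real.log n) := by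
    rw [Real.lt_log_iff_exp_lt (by linarith)]
    calc Real.exp (17/10) < 6 := hexp17
    _ < Real.log n := hlog6
  have hL0 : (0:ℝ) < Real.log (Real.log n) := by linarith
  have hn0 : (0:ℝ) < (n : ℝ) := by linarith
  have hG1 : G n < 1 := by
    rw [G, hsig, div_lt_one (by positivity)]
    have : ((3 * (w + 1) : ℕ) : ℝ) = 3 * ((w:ℝ) + 1) := by push_cast; ring
    rw [this]
    have hnw : (n:ℝ) = 2 * (w:ℝ) := by rw [hn]; push_cast; ring
    nlinarith [hloglog, hwR, hnw]
  linarith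
end
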